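/- Let C' ⊆ {0,1}^{m₁} × {0,1,2}^{m₂} and for a word in {0,1}^{m₁} × {0,1,2}^{m₂} let its 𝒵^{m₁}×𝒯^{m₂}-ball consist of all words obtained by applying at most one transition in at most one coordinate, where in each of the first m₁ (binary) coordinates only the transition 1→0 is allowed and in each of the last m₂ (ternary) coordinates the 𝒯-transitions 1→0, 0→1, 0→2, 2→0 are allowed. If these balls are pairwise disjoint for the codewords of C', then C = {(b,u) ∈ {0,1}^{m₁+2m₂} : b ∈ {0,1}^{m₁}, (b,c) ∈ C', u ∈ 𝔖^{m₂}(c)} satisfies Δ(x,y) ≥ 2 for all distinct x, y ∈ C, i.e., C is a 1-code of length m₁ + 2m₂. -/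

import Mathlib

/-- `N(x,y) = Σᵢ max(yᵢ - xᵢ, 0)` for binary words viewed in `ℤⁿ`. -/
def Nasym {n : ℕ} (x y : Fin n → Fin 2) : ℤ :=
  ∑ i, max (((y i : ℕ) : ℤ) - ((x i : ℕ) : ℤ)) 0

/-- The asymmetric distance `Δ(x,y) = max(N(x,y), N(y,x))`. -/
def Dasym {n : ℕ} (x y : Fin n → Fin 2) : ℤ :=
  max (Nasym x y) (Nasym y x)

/-- The map `𝔖̃` on a binary pair: `00 ↦ 0`, `11 ↦ 0`, `01 ↦ 1`, `10 ↦ 2`. -/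
def Stilde2 (p : Fin 2 × Fin 2) : Fin 3 :=
  if p.1 = p.2 then 0 else if p.1 = 0 then 1 else 2

/-- `𝔖` sends a ternary symbol `t` to the set of binary pairs mapping to it under `𝔖̃`. -/
def Sset (t : Fin 3) : Set (Fin 2 × Fin 2) := {p | Stilde2 p = t}

/-- Membership `u ∈ 𝔖^m(c)`. -/
def Smem {m : ℕ} (c : Fin m → Fin 3) (u : Fin (2 * m) → Fin 2) : Prop :=
  ∀ j : Fin m,
    (u ⟨2 * (j : ℕ), by have := j.isLt; omega⟩,
     u ⟨2 * (j : ℕ) + 1, by have := j.isLt; omega⟩) ∈ Sset (c j)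

/-- The single-symbol transitions of the ternary channel `𝒯`:
`1 → 0`, `0 → 1`, `0 → 2`, `2 → 0`. -/
def Ttrans (a b : Fin 3) : Prop :=
  (a = 1 ∧ b = 0) ∨ (a = 0 ∧ b = 1) ∨ (a = 0 ∧ b = 2) ∨ (a = 2 ∧ b = 0)

/-- The `𝒵^{m₁} × 𝒯^{m₂}`-ball of a word in `{0,1}^{m₁} × {0,1,2}^{m₂}`: words obtained by
applying at most one transition in at most one coordinate, where in each binary coordinate
only `1 → 0` is allowed and in each ternary coordinate the `𝒯`-transitions are allowed. -/
def ZmTBall {m₁ m₂ : ℕ} (w : (Fin m₁ → Fin 2) × (Fin m₂ → Fin 3)) :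
    Set ((Fin m₁ → Fin 2) × (Fin m₂ → Fin 3)) :=
  {d | d = w ∨
       (d.2 = w.2 ∧ ∃ i, w.1 i = 1 ∧ d.1 i = 0 ∧ ∀ j, j ≠ i → d.1 j = w.1 j) ∨
       (d.1 = w.1 ∧ ∃ i, Ttrans (w.2 i) (d.2 i) ∧ ∀ j, j ≠ i → d.2 j = w.2 j)}

/-!
If `Δ(x, y) ≤ 1`, the meet `x ⊓ y` arises from each of `x`, `y` by lowering at most one bit.
Lowering one bit of a binary word moves its image `(b, 𝔖̃(u))` in `{0,1}^{m₁} × {0,1,2}^{m₂}`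
by one `𝒵`- or `𝒯`-transition (for a pair: `01 → 00`, `10 → 00`, `11 → 01`, `11 → 10`), so the
images of `x` and `y` have intersecting balls and therefore coincide. But two distinct binary
words with the same image differ on some pair `00` versus `11`, which forces `Δ(x, y) ≥ 2`.
-/

open Function Finset

lemma Nasym_eq_card {n : ℕ} (x y : Fin n → Fin 2) : Nasym x y = #{i | x i = 0 ∧ y i = 1} := by
  have hterm : ∀ a b : Fin 2,
      max (((b : ℕ) : ℤ) - ((a : ℕ) : ℤ)) 0 = if a = 0 ∧ b = 1 then 1 else 0 := by
    decide
  simp only [Nasym, hterm, sum_boole]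

lemma two_le_Nasym {n : ℕ} {x y : Fin n → Fin 2} {i j : Fin n} (hij : i ≠ j)
    (hi : x i = 0 ∧ y i = 1) (hj : x j = 0 ∧ y j = 1) : 2 ≤ Nasym x y := by
  have hsub : {i, j} ⊆ ({k | x k = 0 ∧ y k = 1} : Finset (Fin n)) := by
    simp [insert_subset_iff, hi, hj]
  have h := card_le_card hsub
  rw [card_pair hij] at h
  rw [Nasym_eq_card]
  exact_mod_cast h

lemma exists_inf_eq_update_of_Nasym_le_one {n : ℕ} [Nonempty (Fin n)] {x y : Fin n → Fin 2}
    (h : Nasym y x ≤ 1) : ∃ k, x ⊓ y = update x k (x k ⊓ y k) := by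
  rw [Nasym_eq_card] at h
  obtain ⟨k, hk⟩ := card_le_one_iff_subset_singleton.mp (by exact_mod_cast h)
  refine ⟨k, eq_update_iff.mpr ⟨rfl, fun i hik => inf_eq_left.mpr ?_⟩⟩
  have hi : ¬(y i = 0 ∧ x i = 1) := fun hi => hik (mem_singleton.mp (hk (by simpa using hi)))
  revert hi; generalize x i = a; generalize y i = b; revert a b; decide

def Stilde {m : ℕ} (u : Fin (2 * m) → Fin 2) : Fin m → Fin 3 := fun j =>
  Stilde2 (u ⟨2 * (j : ℕ), by have := j.isLt; omega⟩, u ⟨2 * (j : ℕ) + 1, by have := j.isLt; omega⟩)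

lemma Stilde_eq_of_Smem {m : ℕ} {c : Fin m → Fin 3} {u : Fin (2 * m) → Fin 2} (h : Smem c u) :
    Stilde u = c :=
  funext h

def toZmT {m₁ m₂ : ℕ} (x : Fin (m₁ + 2 * m₂) → Fin 2) :
    (Fin m₁ → Fin 2) × (Fin m₂ → Fin 3) :=
  (x ∘ Fin.castAdd (2 * m₂), Stilde (x ∘ Fin.natAdd m₁))

lemma toZmT_append {m₁ m₂ : ℕ} (b : Fin m₁ → Fin 2) {c : Fin m₂ → Fin 3}
    {u : Fin (2 * m₂) → Fin 2} (h : Smem c u) : toZmT (Fin.append b u) = (b, c) := by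
  ext1
  · exact funext (Fin.append_left b u)
  · rw [← Stilde_eq_of_Smem h]; exact congrArg Stilde (funext (Fin.append_right b u))

lemma Stilde2_eq_or_Ttrans_of_le :
    ∀ p q : Fin 2 × Fin 2, q ≤ p → Stilde2 q = Stilde2 p ∨ Ttrans (Stilde2 p) (Stilde2 q) := by
  unfold Ttrans; decide

lemma Stilde_apply_eq_or_Ttrans_of_le {m : ℕ} {u v : Fin (2 * m) → Fin 2} (h : v ≤ u) (j : Fin m) :
    Stilde v j = Stilde u j ∨ Ttrans (Stilde u j) (Stilde v j) :=
  Stilde2_eq_or_Ttrans_of_le _ _ ⟨h _, h _⟩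

lemma Stilde_update_apply_of_ne {m : ℕ} (u : Fin (2 * m) → Fin 2) (l : Fin (2 * m)) (a : Fin 2)
    {j : Fin m} (hj : (j : ℕ) ≠ l / 2) : Stilde (update u l a) j = Stilde u j := by
  unfold Stilde
  rw [update_of_ne, update_of_ne] <;> simp only [ne_eq, Fin.ext_iff] <;> omega

lemma Stilde_update {m : ℕ} (u : Fin (2 * m) → Fin 2) (l : Fin (2 * m)) (a : Fin 2) :
    Stilde (update u l a) =
      update (Stilde u) ⟨l / 2, by omega⟩ (Stilde (update u l a) ⟨l / 2, by omega⟩) :=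
  eq_update_iff.mpr ⟨rfl, fun _ hj => Stilde_update_apply_of_ne u l a (fun h => hj (Fin.ext h))⟩

lemma update_fst_mem_ZmTBall {m₁ m₂ : ℕ} {b : Fin m₁ → Fin 2} (c : Fin m₂ → Fin 3) {i : Fin m₁}
    {a : Fin 2} (h : a ≤ b i) : (update b i a, c) ∈ ZmTBall (b, c) := by
  rcases eq_or_lt_of_le h with rfl | hlt
  · exact Or.inl (by rw [update_eq_self])
  · obtain ⟨rfl, hb⟩ : a = 0 ∧ b i = 1 := by
      clear h; revert hlt; generalize b i = t; revert a t; decide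
    exact Or.inr (Or.inl ⟨rfl, i, hb, update_self _ _ _, fun j hj => update_of_ne hj _ _⟩)

lemma update_snd_mem_ZmTBall {m₁ m₂ : ℕ} (b : Fin m₁ → Fin 2) {c : Fin m₂ → Fin 3} {j : Fin m₂}
    {t : Fin 3} (h : t = c j ∨ Ttrans (c j) t) : (b, update c j t) ∈ ZmTBall (b, c) := by
  rcases h with rfl | ht
  · exact Or.inl (by rw [update_eq_self])
  · exact Or.inr (Or.inr ⟨rfl, j, by simpa using ht, fun j' hj' => update_of_ne hj' _ _⟩)

lemma toZmT_update_mem_ZmTBall {m₁ m₂ : ℕ} (x : Fin (m₁ + 2 * m₂) → Fin 2)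
    (k : Fin (m₁ + 2 * m₂)) {a : Fin 2} (h : a ≤ x k) :
    toZmT (update x k a) ∈ ZmTBall (toZmT x) := by
  induction k using Fin.addCases with
  | left i =>
    have hne : ∀ l : Fin (2 * m₂), Fin.natAdd m₁ l ≠ Fin.castAdd (2 * m₂) i := by
      simp only [ne_eq, Fin.ext_iff, Fin.val_natAdd, Fin.val_castAdd]; omega
    simp only [toZmT]
    rw [update_comp_eq_of_injective _ (Fin.castAdd_injective _ _),
      update_comp_eq_of_forall_ne _ _ hne]
    exact update_fst_mem_ZmTBall _ h
  | right l =>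
    have hne : ∀ i : Fin m₁, Fin.castAdd (2 * m₂) i ≠ Fin.natAdd m₁ l := by
      simp only [ne_eq, Fin.ext_iff, Fin.val_natAdd, Fin.val_castAdd]; omega
    simp only [toZmT]
    rw [update_comp_eq_of_injective _ (Fin.natAdd_injective _ _),
      update_comp_eq_of_forall_ne _ _ hne, Stilde_update]
    exact update_snd_mem_ZmTBall _ (Stilde_apply_eq_or_Ttrans_of_le (by simpa using h) _)

lemma toZmT_inf_mem_ZmTBall {m₁ m₂ : ℕ} {x y : Fin (m₁ + 2 * m₂) → Fin 2} (h : Nasym y x ≤ 1) :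
    toZmT (x ⊓ y) ∈ ZmTBall (toZmT x) := by
  rcases isEmpty_or_nonempty (Fin (m₁ + 2 * m₂)) with _ | _
  · exact Or.inl (congrArg toZmT (Subsingleton.elim _ _))
  · obtain ⟨k, hk⟩ := exists_inf_eq_update_of_Nasym_le_one h
    rw [hk]
    exact toZmT_update_mem_ZmTBall x k inf_le_left

lemma eq_00_11_of_Stilde2_eq_of_ne : ∀ p q : Fin 2 × Fin 2, p ≠ q → Stilde2 p = Stilde2 q →
    (p = (0, 0) ∧ q = (1, 1)) ∨ (p = (1, 1) ∧ q = (0, 0)) := by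
  decide

lemma two_le_Dasym_of_toZmT_eq {m₁ m₂ : ℕ} {x y : Fin (m₁ + 2 * m₂) → Fin 2}
    (h : toZmT x = toZmT y) (hxy : x ≠ y) : 2 ≤ Dasym x y := by
  obtain ⟨k, hk⟩ := ne_iff.mp hxy
  induction k using Fin.addCases with
  | left i => exact absurd (congrFun (congrArg Prod.fst h) i) hk
  | right l =>
    obtain ⟨j, hj⟩ : ∃ j : Fin m₂, (j : ℕ) = l / 2 := ⟨⟨l / 2, by omega⟩, rfl⟩
    have := j.isLt
    set k₀ := Fin.natAdd m₁ (⟨2 * (j : ℕ), by omega⟩ : Fin (2 * m₂))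
    set k₁ := Fin.natAdd m₁ (⟨2 * (j : ℕ) + 1, by omega⟩ : Fin (2 * m₂))
    have hk₀₁ : k₀ ≠ k₁ := by simp [k₀, k₁, Fin.ext_iff]
    have hpair : (x k₀, x k₁) ≠ (y k₀, y k₁) := by
      obtain hl | hl : l = ⟨2 * (j : ℕ), by omega⟩ ∨ l = ⟨2 * (j : ℕ) + 1, by omega⟩ := by
        simp only [Fin.ext_iff]; omega
      · rw [hl] at hk; exact fun he => hk (congrArg Prod.fst he)
      · rw [hl] at hk; exact fun he => hk (congrArg Prod.snd he)
    rcases eq_00_11_of_Stilde2_eq_of_ne _ _ hpair (congrFun (congrArg Prod.snd h) j) with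
      ⟨hx, hy⟩ | ⟨hx, hy⟩
    · simp only [Prod.mk.injEq] at hx hy
      exact (two_le_Nasym hk₀₁ ⟨hx.1, hy.1⟩ ⟨hx.2, hy.2⟩).trans (le_max_left _ _)
    · simp only [Prod.mk.injEq] at hx hy
      exact (two_le_Nasym hk₀₁ ⟨hy.1, hx.1⟩ ⟨hy.2, hx.2⟩).trans (le_max_right _ _)

/-- If `C' ⊆ {0,1}^{m₁} × {0,1,2}^{m₂}` has pairwise disjoint `𝒵^{m₁} × 𝒯^{m₂}`-balls,
then `C = {(b,u) : (b,c) ∈ C', u ∈ 𝔖^{m₂}(c)} ⊆ {0,1}^{m₁+2m₂}` is a `1`-code of length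
`m₁ + 2m₂`: `Δ(x,y) ≥ 2` for all distinct `x, y ∈ C`. -/
theorem image_of_ZmT_sec_is_one_code (m₁ m₂ : ℕ)
    (C' : Set ((Fin m₁ → Fin 2) × (Fin m₂ → Fin 3)))
    (hsec : ∀ w ∈ C', ∀ w' ∈ C', w ≠ w' → Disjoint (ZmTBall w) (ZmTBall w')) :
    ∀ x y : Fin (m₁ + 2 * m₂) → Fin 2,
      (∃ w ∈ C', ∃ u : Fin (2 * m₂) → Fin 2, Smem w.2 u ∧ x = Fin.append w.1 u) →
      (∃ w ∈ C', ∃ u : Fin (2 * m₂) → Fin 2, Smem w.2 u ∧ y = Fin.append w.1 u) →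
      x ≠ y → 2 ≤ Dasym x y := by
  rintro x y ⟨w, hw, u, hu, hx⟩ ⟨w', hw', u', hu', hy⟩ hxy
  replace hx : toZmT x = w := by rw [hx, toZmT_append _ hu]
  replace hy : toZmT y = w' := by rw [hy, toZmT_append _ hu']
  by_contra! hlt
  obtain ⟨hNxy, hNyx⟩ : Nasym x y ≤ 1 ∧ Nasym y x ≤ 1 := by
    simp only [Dasym, max_lt_iff] at hlt; omega
  have hmeet : toZmT (x ⊓ y) ∈ ZmTBall w ∩ ZmTBall w' :=
    ⟨hx ▸ toZmT_inf_mem_ZmTBall hNyx, hy ▸ inf_comm y x ▸ toZmT_inf_mem_ZmTBall hNxy⟩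
  have hww : w = w' := by
    by_contra hne
    exact (hsec w hw w' hw' hne).le_bot hmeet
  exact hlt.not_ge (two_le_Dasym_of_toZmT_eq (hx.trans (hww.trans hy.symm)) hxy)
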